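/- Let k ≥ 2, let A be an n×n complex matrix satisfying Re(x*Ax) ≥ 0 for all x ∈ ℂⁿ, and let γ > 0 (so I + γA is invertible). Let V_{k+1} = [V_k, v_{k+1}] be an n×(k+1) matrix with orthonormal columns, let H̃ be an invertible k×k complex matrix and h̃ ≥ 0 a real number such that (I + γA)⁻¹V_k = V_k·H̃ + h̃·v_{k+1}·e_kᵀ. Set H := (1/γ)(H̃⁻¹ − I_k), and assume ω_k ≥ 0 is a constant such that Re(x*Hx) ≥ ω_k‖x‖² for all x ∈ ℂᵏ. Let β > 0, u(t) := β·exp(−tH)e₁, y_k(t) := V_k·u(t), and r_k(t) := −A·y_k(t) − y_k′(t). If in addition e_kᵀHe₁ = 0, then for every ε > 0 there exists δ > 0 such that ‖r_k(s)‖ ≤ ε for all s ∈ [0, δ]. -/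

import Mathlib

open Matrix
open scoped Matrix.Norms.L2Operator

/-- Remark after Proposition 1: in the SAI Krylov setting, if `h_{k,1} = e_kᵀ H e₁ = 0`,
then for every tolerance `ε > 0` there is `δ > 0` such that the residual satisfies
`‖r_k(s)‖ ≤ ε` for all `s ∈ [0, δ]`. -/
theorem sai_residual_small_interval (n k : ℕ) (hk : 2 ≤ k)
    (A : Matrix (Fin n) (Fin n) ℂ)
    (hA : ∀ x : Fin n → ℂ, 0 ≤ (star x ⬝ᵥ A.mulVec x).re)
    (γ : ℝ) (hγ : 0 < γ)
    (Vk : Matrix (Fin n) (Fin k) ℂ) (vk1 : Matrix (Fin n) (Fin 1) ℂ)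
    (horth : (Matrix.fromCols Vk vk1)ᴴ * Matrix.fromCols Vk vk1 = 1)
    (Ht : Matrix (Fin k) (Fin k) ℂ) (hHt : IsUnit Ht) (ht : ℝ) (hht : 0 ≤ ht)
    (harn : (1 + (γ : ℂ) • A)⁻¹ * Vk = Vk * Ht +
      (ht : ℂ) • (vk1 * Matrix.single (0 : Fin 1) (⟨k - 1, by omega⟩ : Fin k) (1 : ℂ)))
    (H : Matrix (Fin k) (Fin k) ℂ) (hH : H = (γ : ℂ)⁻¹ • (Ht⁻¹ - 1))
    (ωk : ℝ) (hωk : 0 ≤ ωk)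
    (hfov : ∀ x : Fin k → ℂ, ωk * (star x ⬝ᵥ x).re ≤ (star x ⬝ᵥ H.mulVec x).re)
    (β : ℝ) (hβ : 0 < β)
    (u : ℝ → Matrix (Fin k) (Fin 1) ℂ)
    (hu : ∀ t : ℝ, u t = (β : ℂ) • (NormedSpace.exp ((-t : ℂ) • H) *
      Matrix.single (⟨0, by omega⟩ : Fin k) (0 : Fin 1) (1 : ℂ)))
    (y yd r : ℝ → Matrix (Fin n) (Fin 1) ℂ)
    (hy : ∀ t : ℝ, y t = Vk * u t)
    (hyd : ∀ t : ℝ, yd t = -(Vk * (H * u t)))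
    (hr : ∀ t : ℝ, r t = -(A * y t) - yd t)
    (hk1 : H (⟨k - 1, by omega⟩ : Fin k) (⟨0, by omega⟩ : Fin k) = 0) :
    ∀ ε : ℝ, 0 < ε → ∃ δ : ℝ, 0 < δ ∧ ∀ s ∈ Set.Icc (0 : ℝ) δ, ‖r s‖ ≤ ε := by
  intro ε hε
  set E : Matrix (Fin k) (Fin 1) ℂ :=
    Matrix.single (⟨0, by omega⟩ : Fin k) (0 : Fin 1) (1 : ℂ) with hE
  set Ek : Matrix (Fin 1) (Fin k) ℂ :=
    Matrix.single (0 : Fin 1) (⟨k - 1, by omega⟩ : Fin k) (1 : ℂ) with hEk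
  set B : Matrix (Fin n) (Fin n) ℂ := 1 + (γ : ℂ) • A with hB
  have hγ0 : (γ : ℂ) ≠ 0 := by exact_mod_cast hγ.ne'
  -- B is invertible
  have hBdet : IsUnit B.det := by
    rw [isUnit_iff_ne_zero]
    intro hdet
    obtain ⟨v, hv0, hv⟩ := (Matrix.exists_mulVec_eq_zero_iff).mpr hdet
    have h2 : (star v ⬝ᵥ B.mulVec v) = 0 := by rw [hv, dotProduct_zero]
    have h3 : (star v ⬝ᵥ B.mulVec v).re
        = (star v ⬝ᵥ v).re + γ * (star v ⬝ᵥ A.mulVec v).re := by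
      rw [hB, Matrix.add_mulVec, Matrix.one_mulVec, Matrix.smul_mulVec,
        dotProduct_add, dotProduct_smul]
      simp [Complex.add_re, Complex.re_ofReal_mul]
    have h4 : 0 < (star v ⬝ᵥ v).re := by
      have : (star v ⬝ᵥ v).re = ∑ i, Complex.normSq (v i) := by
        simp [dotProduct, Complex.normSq_eq_conj_mul_self, Complex.re_sum,
          Complex.normSq_apply]
      rw [this]
      obtain ⟨i, hi⟩ := Function.ne_iff.mp hv0
      exact Finset.sum_pos' (fun j _ => Complex.normSq_nonneg _)
        ⟨i, Finset.mem_univ i, by simpa [Complex.normSq_pos] using hi⟩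
    have h2' : (star v ⬝ᵥ B.mulVec v).re = 0 := by rw [h2]; simp
    nlinarith [hA v, mul_nonneg hγ.le (hA v)]
  have hHtdet : IsUnit Ht.det := (Matrix.isUnit_iff_isUnit_det Ht).mp hHt
  have hHtinv : Ht * Ht⁻¹ = 1 := Matrix.mul_nonsing_inv _ hHtdet
  -- Ht⁻¹ in terms of H
  have hHti : Ht⁻¹ = (γ : ℂ) • H + 1 := by
    rw [hH, smul_smul, mul_inv_cancel₀ hγ0, one_smul, sub_add_cancel]
  -- Ek * (H * E) = 0
  have hEkHE : Ek * (H * E) = 0 := by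
    ext i j
    fin_cases i; fin_cases j
    simp [hEk, hE, Matrix.mul_apply, Matrix.single, hk1]
  -- Ek * E = 0
  have hEkE : Ek * E = 0 := by
    ext i j
    fin_cases i; fin_cases j
    have hne : (⟨k - 1, by omega⟩ : Fin k) ≠ (⟨0, by omega⟩ : Fin k) := by
      simp [Fin.ext_iff]; omega
    simp [hEk, hE, Matrix.mul_apply, Matrix.single, hne]
  have hHtiE : Ht⁻¹ * E = (γ : ℂ) • (H * E) + E := by
    rw [hHti, Matrix.add_mul, Matrix.smul_mul, Matrix.one_mul]
  have hEkHti : Ek * (Ht⁻¹ * E) = 0 := by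
    rw [hHtiE, Matrix.mul_add, Matrix.mul_smul, hEkHE, hEkE]
    simp
  -- key: B⁻¹ * (Vk * (Ht⁻¹ * E)) = Vk * E
  have h4 : B⁻¹ * (Vk * (Ht⁻¹ * E)) = Vk * E := by
    rw [← Matrix.mul_assoc, harn, Matrix.add_mul, Matrix.smul_mul, Matrix.mul_assoc Vk Ht,
      ← Matrix.mul_assoc Ht, hHtinv, Matrix.one_mul, Matrix.mul_assoc vk1 Ek, hEkHti]
    simp
  have h5 : Vk * (Ht⁻¹ * E) = B * (Vk * E) := by
    have := congrArg (fun M => B * M) h4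
    simpa [← Matrix.mul_assoc, Matrix.mul_nonsing_inv B hBdet] using this
  have hkey : A * (Vk * E) = Vk * (H * E) := by
    have h6 : (γ : ℂ) • (Vk * (H * E)) + Vk * E
        = Vk * E + (γ : ℂ) • (A * (Vk * E)) := by
      have hL : Vk * (Ht⁻¹ * E) = (γ : ℂ) • (Vk * (H * E)) + Vk * E := by
        rw [hHti, Matrix.add_mul, Matrix.one_mul, Matrix.mul_add, Matrix.smul_mul,
          Matrix.mul_smul]
      have hR : B * (Vk * E) = Vk * E + (γ : ℂ) • (A * (Vk * E)) := by
        rw [hB, Matrix.add_mul, Matrix.one_mul, Matrix.smul_mul]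
      rw [← hL, ← hR, h5]
    have h7 : (γ : ℂ) • (Vk * (H * E)) = (γ : ℂ) • (A * (Vk * E)) := by
      have := h6
      rwa [add_comm ((γ : ℂ) • (Vk * (H * E))) (Vk * E), add_right_inj] at this
    exact (smul_right_injective _ hγ0 h7).symm
  -- rewrite r
  have hre : r = fun t : ℝ => (β : ℂ) •
      (Vk * (H * (NormedSpace.exp ((-t : ℂ) • H) * E))
        - A * (Vk * (NormedSpace.exp ((-t : ℂ) • H) * E))) := by
    funext t
    rw [hr, hy, hyd, hu]
    simp only [Matrix.mul_smul, smul_sub, smul_neg, sub_neg_eq_add]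
    module
  -- r 0 = 0
  have hr0 : r 0 = 0 := by
    rw [hre]
    simp only [Complex.ofReal_zero, neg_zero, zero_smul, NormedSpace.exp_zero,
      Matrix.one_mul, hkey, sub_self, smul_zero]
  -- continuity
  have hexp : Continuous fun t : ℝ => NormedSpace.exp ((-t : ℂ) • H) := by
    letI : NormedAlgebra ℚ (Matrix (Fin k) (Fin k) ℂ) := NormedAlgebra.restrictScalars ℚ ℂ _
    exact NormedSpace.exp_continuous.comp (by fun_prop)
  have hcont : Continuous r := by
    rw [hre]
    fun_prop
  have hnc : ContinuousAt (fun s => ‖r s‖) 0 := (hcont.norm).continuousAt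
  rw [Metric.continuousAt_iff] at hnc
  obtain ⟨δ, hδ, hδ'⟩ := hnc ε hε
  refine ⟨δ / 2, by positivity, fun s hs => ?_⟩
  obtain ⟨hs0, hs1⟩ := hs
  have hd : dist s 0 < δ := by
    rw [Real.dist_eq, sub_zero, abs_of_nonneg hs0]; linarith
  have := hδ' hd
  rw [hr0, norm_zero, Real.dist_eq, sub_zero, abs_of_nonneg (norm_nonneg _)] at this
  exact this.le
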